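/- For all real numbers λ_1 > λ_2 > 0, ∫_0^{2π} λ_1 λ_2 cos²(α) sin²(α) / (λ_1 cos²(α) + λ_2 sin²(α))² dα = 2π (−λ_1 λ_2 + (1/2) √(λ_1 λ_2) (λ_1 + λ_2)) / (λ_1 − λ_2)². -/

import Mathlib

open MeasureTheory Real

/-!
Write `D = l₁ cos² α + l₂ sin² α`. Since `cos² α = (D - l₂) / (l₁ - l₂)` and
`sin² α = (l₁ - D) / (l₁ - l₂)`, the integrand is a quadratic polynomial in `1 / D`, so it
suffices to know `∫ 1 / D = 2π / √(l₁ l₂)` and `∫ 1 / D² = π (l₁ + l₂) / (l₁ l₂)^(3/2)`. The first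
integral is `1 / √(l₁ l₂)` times the increase, over one turn, of the polar angle of
`(√l₁ cos α, √l₂ sin α)`. The second reduces to the first because
`(l₂ - l₁) (sin α cos α / D)' = 2 l₁ l₂ / D² - (l₁ + l₂) / D` and `sin α cos α / D` vanishes at
both ends of `[0, 2π]`.
-/

theorem mul_cos_sq_add_mul_sin_sq_pos {a b : ℝ} (ha : 0 < a) (hb : 0 < b) (x : ℝ) :
    0 < a * cos x ^ 2 + b * sin x ^ 2 := by
  nlinarith [sin_sq_add_cos_sq x, mul_nonneg (sub_nonneg.2 (min_le_left a b)) (sq_nonneg (cos x)),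
    mul_nonneg (sub_nonneg.2 (min_le_right a b)) (sq_nonneg (sin x)), lt_min ha hb]

theorem continuous_inv_mul_cos_sq_add_mul_sin_sq {a b : ℝ} (ha : 0 < a) (hb : 0 < b) :
    Continuous fun x => (a * cos x ^ 2 + b * sin x ^ 2)⁻¹ := by
  fun_prop (disch := exact fun x => (mul_cos_sq_add_mul_sin_sq_pos ha hb x).ne')

/-- The polar angle of `(p * cos x, q * sin x)`, continuous in `x`: wherever `cos x ≠ 0`, the
`arctan` term equals `arctan ((q / p) * tan x) - arctan (tan x)`. -/
noncomputable def ellipseAngle (p q x : ℝ) : ℝ :=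
  x + arctan ((q - p) * sin x * cos x / (p * cos x ^ 2 + q * sin x ^ 2))

theorem ellipseAngle_of_sin_eq_zero (p q : ℝ) {x : ℝ} (hx : sin x = 0) :
    ellipseAngle p q x = x := by
  simp [ellipseAngle, hx]

theorem hasDerivAt_ellipseAngle {p q : ℝ} (hp : 0 < p) (hq : 0 < q) (x : ℝ) :
    HasDerivAt (ellipseAngle p q) (p * q / (p ^ 2 * cos x ^ 2 + q ^ 2 * sin x ^ 2)) x := by
  have hsc := sin_sq_add_cos_sq x
  have hM := mul_cos_sq_add_mul_sin_sq_pos hp hq x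
  have hE := mul_cos_sq_add_mul_sin_sq_pos (pow_pos hp 2) (pow_pos hq 2) x
  have hN : HasDerivAt (fun x => (q - p) * sin x * cos x)
      ((q - p) * cos x * cos x + (q - p) * sin x * -sin x) x :=
    ((hasDerivAt_sin x).const_mul (q - p)).mul (hasDerivAt_cos x)
  have hMd : HasDerivAt (fun x => p * cos x ^ 2 + q * sin x ^ 2)
      (p * (2 * cos x * -sin x) + q * (2 * sin x * cos x)) x := by
    refine ((((hasDerivAt_cos x).fun_pow 2).const_mul p).fun_add
      (((hasDerivAt_sin x).fun_pow 2).const_mul q)).congr_deriv ?_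
    norm_num
  refine ((hasDerivAt_id x).add (hN.fun_div hMd hM.ne').arctan).congr_deriv ?_
  set E := p ^ 2 * cos x ^ 2 + q ^ 2 * sin x ^ 2
  have hu : 1 + ((q - p) * sin x * cos x / (p * cos x ^ 2 + q * sin x ^ 2)) ^ 2
      = E / (p * cos x ^ 2 + q * sin x ^ 2) ^ 2 := by
    rw [div_pow, one_add_div (by positivity)]
    congr 1
    linear_combination E * hsc
  rw [hu, one_div_div, div_mul_div_cancel₀' (by positivity), one_add_div hE.ne']
  congr 1
  linear_combination (p * q * (1 + cos x ^ 2 + sin x ^ 2) - E) * hsc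

theorem integral_inv_mul_cos_sq_add_mul_sin_sq {a b : ℝ} (ha : 0 < a) (hb : 0 < b) :
    ∫ x in (0 : ℝ)..(2 * π), (a * cos x ^ 2 + b * sin x ^ 2)⁻¹ = 2 * π / √(a * b) := by
  have hab : 0 < √(a * b) := sqrt_pos.2 (mul_pos ha hb)
  have hderiv (x : ℝ) : HasDerivAt (ellipseAngle √a √b)
      (√(a * b) * (a * cos x ^ 2 + b * sin x ^ 2)⁻¹) x := by
    convert hasDerivAt_ellipseAngle (sqrt_pos.2 ha) (sqrt_pos.2 hb) x using 1
    rw [sq_sqrt ha.le, sq_sqrt hb.le, sqrt_mul ha.le, div_eq_mul_inv]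
  have h := intervalIntegral.integral_eq_sub_of_hasDerivAt (fun x _ => hderiv x)
    (((continuous_inv_mul_cos_sq_add_mul_sin_sq ha hb).const_mul _).intervalIntegrable 0 (2 * π))
  rw [intervalIntegral.integral_const_mul, ellipseAngle_of_sin_eq_zero _ _ sin_two_pi,
    ellipseAngle_of_sin_eq_zero _ _ sin_zero, sub_zero] at h
  rw [eq_div_iff hab.ne', mul_comm, h]

theorem hasDerivAt_sub_mul_sin_mul_cos_div (a b : ℝ) {x : ℝ}
    (hx : a * cos x ^ 2 + b * sin x ^ 2 ≠ 0) :
    HasDerivAt (fun x => (b - a) * (sin x * cos x / (a * cos x ^ 2 + b * sin x ^ 2)))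
      (2 * a * b * (a * cos x ^ 2 + b * sin x ^ 2)⁻¹ ^ 2
        - (a + b) * (a * cos x ^ 2 + b * sin x ^ 2)⁻¹) x := by
  have hD : HasDerivAt (fun x => a * cos x ^ 2 + b * sin x ^ 2)
      (a * (2 * cos x * -sin x) + b * (2 * sin x * cos x)) x := by
    refine ((((hasDerivAt_cos x).fun_pow 2).const_mul a).fun_add
      (((hasDerivAt_sin x).fun_pow 2).const_mul b)).congr_deriv ?_
    norm_num
  refine ((((hasDerivAt_sin x).fun_mul (hasDerivAt_cos x)).fun_div hD hx).const_mul
    (b - a)).congr_deriv ?_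
  rw [show 2 * a * b * (a * cos x ^ 2 + b * sin x ^ 2)⁻¹ ^ 2
      - (a + b) * (a * cos x ^ 2 + b * sin x ^ 2)⁻¹
      = (2 * a * b - (a + b) * (a * cos x ^ 2 + b * sin x ^ 2))
        / (a * cos x ^ 2 + b * sin x ^ 2) ^ 2
    by field_simp, mul_div_assoc']
  congr 1
  linear_combination (2 * a * b * (cos x ^ 2 + sin x ^ 2 + 1)
    - (a + b) * (a * cos x ^ 2 + b * sin x ^ 2)) * sin_sq_add_cos_sq x

theorem integral_inv_sq_mul_cos_sq_add_mul_sin_sq {a b : ℝ} (ha : 0 < a) (hb : 0 < b) :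
    ∫ x in (0 : ℝ)..(2 * π), (a * cos x ^ 2 + b * sin x ^ 2)⁻¹ ^ 2
      = π * (a + b) / (a * b * √(a * b)) := by
  have hcont := continuous_inv_mul_cos_sq_add_mul_sin_sq ha hb
  have h := intervalIntegral.integral_eq_sub_of_hasDerivAt
    (fun x _ => hasDerivAt_sub_mul_sin_mul_cos_div a b (mul_cos_sq_add_mul_sin_sq_pos ha hb x).ne')
    ((((hcont.pow 2).const_mul _).sub (hcont.const_mul _)).intervalIntegrable 0 (2 * π))
  rw [intervalIntegral.integral_sub, intervalIntegral.integral_const_mul,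
    intervalIntegral.integral_const_mul, integral_inv_mul_cos_sq_add_mul_sin_sq ha hb] at h
  · simp only [sin_zero, sin_two_pi, zero_mul, zero_div, mul_zero, sub_zero] at h
    generalize ∫ x in (0 : ℝ)..(2 * π), (a * cos x ^ 2 + b * sin x ^ 2)⁻¹ ^ 2 = I at h ⊢
    field_simp at h ⊢
    linear_combination h / 2
  · exact ((hcont.pow 2).const_mul _).intervalIntegrable _ _
  · exact (hcont.const_mul _).intervalIntegrable _ _

theorem mul_cos_sq_mul_sin_sq_div_sq {a b x : ℝ} (hab : a ≠ b)
    (hx : a * cos x ^ 2 + b * sin x ^ 2 ≠ 0) :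
    a * b * cos x ^ 2 * sin x ^ 2 / (a * cos x ^ 2 + b * sin x ^ 2) ^ 2
      = a * b / (a - b) ^ 2 * (-1 + (a + b) * (a * cos x ^ 2 + b * sin x ^ 2)⁻¹
        - a * b * (a * cos x ^ 2 + b * sin x ^ 2)⁻¹ ^ 2) := by
  have hcs : (a - b) ^ 2 * (cos x ^ 2 * sin x ^ 2)
      = (a * cos x ^ 2 + b * sin x ^ 2 - b) * (a - (a * cos x ^ 2 + b * sin x ^ 2)) := by
    linear_combination (a * (a - b) * cos x ^ 2 - b * (a - b) * sin x ^ 2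
      + a * b * (cos x ^ 2 + sin x ^ 2 - 1)) * sin_sq_add_cos_sq x
  have hab' : a - b ≠ 0 := sub_ne_zero.2 hab
  field_simp
  linear_combination a * b * hcs

/-- For λ₁ > λ₂ > 0,
∫₀^{2π} λ₁ λ₂ cos²α sin²α / (λ₁ cos²α + λ₂ sin²α)² dα
  = 2π (−λ₁λ₂ + ½ √(λ₁λ₂) (λ₁ + λ₂)) / (λ₁ − λ₂)². -/
theorem sscm_angular_integral_mixed (l₁ l₂ : ℝ) (h₂ : 0 < l₂) (h₁₂ : l₂ < l₁) :
    ∫ α in (0 : ℝ)..(2 * π),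
        l₁ * l₂ * Real.cos α ^ 2 * Real.sin α ^ 2
          / (l₁ * Real.cos α ^ 2 + l₂ * Real.sin α ^ 2) ^ 2
      = 2 * π * (-(l₁ * l₂) + (1 / 2) * Real.sqrt (l₁ * l₂) * (l₁ + l₂)) / (l₁ - l₂) ^ 2 := by
  have h₁ : 0 < l₁ := h₂.trans h₁₂
  have hcont := continuous_inv_mul_cos_sq_add_mul_sin_sq h₁ h₂
  simp_rw [mul_cos_sq_mul_sin_sq_div_sq h₁₂.ne' (mul_cos_sq_add_mul_sin_sq_pos h₁ h₂ _).ne']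
  rw [intervalIntegral.integral_const_mul, intervalIntegral.integral_sub,
    intervalIntegral.integral_add, intervalIntegral.integral_const,
    intervalIntegral.integral_const_mul, intervalIntegral.integral_const_mul,
    integral_inv_mul_cos_sq_add_mul_sin_sq h₁ h₂, integral_inv_sq_mul_cos_sq_add_mul_sin_sq h₁ h₂]
  · have hne : l₁ - l₂ ≠ 0 := sub_ne_zero.2 h₁₂.ne'
    field_simp
    linear_combination -(l₁ + l₂) * π * sq_sqrt (mul_pos h₁ h₂).le
  all_goals exact Continuous.intervalIntegrable (by fun_prop) _ _
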